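/- Let 0 = n_0 < n_1 < n_2 < ⋯ be a strictly increasing sequence of positive integers and let X^1, X^2, X^3, … be binary-valued stochastic processes on a common probability space that are mutually independent, where X^i = (X^i_n)_{n≥1} is asymptotically n_i-order two-faced for each i. Define the process W = (W_n)_{n≥1} by W_i = X^1_i ⊕ X^2_i ⊕ … ⊕ X^m_i whenever n_{m−1} < i ≤ n_m (addition modulo 2). Then W is asymptotically twice two-faced: for every integer k ≥ 1 and every word u ∈ {0,1}^k, lim_{j→∞} P(W_{j+1}…W_{j+k} = u) = 2^{−k}. -/

import Mathlib

open MeasureTheory ProbabilityTheory Filter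

/-- The event that the block `X_{j+1} … X_{j+|u|}` of the binary process `X` equals the
word `u` (bits: `false = 0`, `true = 1`; the process is `X 1, X 2, …`). -/
def blockEvent {Ω : Type*} (X : ℕ → Ω → Bool) (j : ℕ) (u : List Bool) : Set Ω :=
  {ω | ∀ i, i < u.length → X (j + 1 + i) ω = u.getD i false}

/-- A binary process `(X_n)_{n≥1}` is `k`-order two-faced if for every `j ≥ 0` and every
word `u ∈ {0,1}^k`, `P(X_{j+1}…X_{j+k} = u) = 2^{-k}`. -/
def IsTwoFaced {Ω : Type*} [MeasurableSpace Ω] (P : Measure Ω)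
    (X : ℕ → Ω → Bool) (k : ℕ) : Prop :=
  ∀ (j : ℕ) (u : List Bool), u.length = k →
    (P (blockEvent X j u)).toReal = ((2 : ℝ) ^ k)⁻¹

/-- A binary process `(X_n)_{n≥1}` is asymptotically `k`-order two-faced if for every
word `u ∈ {0,1}^k`, `lim_{j→∞} P(X_{j+1}…X_{j+k} = u) = 2^{-k}`. -/
def IsAsympTwoFaced {Ω : Type*} [MeasurableSpace Ω] (P : Measure Ω)
    (X : ℕ → Ω → Bool) (k : ℕ) : Prop :=
  ∀ u : List Bool, u.length = k →
    Tendsto (fun j : ℕ => (P (blockEvent X j u)).toReal) atTop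
      (nhds (((2 : ℝ) ^ k)⁻¹))

/-!
Fix `k ≥ 1` and put `t = k - 1`. Beyond position `n t` every `W_i` contains the summand `X t i`,
so on that tail `W = Y ⊕ X t` with `Y` a function of the other processes, hence independent of
`X t`. As `k ≤ n (t + 1)`, the process `X t` is asymptotically `k`-order two-faced, and splitting
according to the `k`-block `v` of `Y` gives
`P(W-block = u) = ∑ v, P(Y-block = v) * P(X t-block = u ⊕ v)`,
a convex combination of quantities that tend to `2⁻ᵏ`.
-/

theorem Nat.exists_lt_and_le_apply_succ {n : ℕ → ℕ} {i M : ℕ} (h0 : n 0 < i) (hM : i ≤ n M) :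
    ∃ m, n m < i ∧ i ≤ n (m + 1) := by
  classical
  have hex : ∃ m, i ≤ n m := ⟨M, hM⟩
  obtain ⟨m, hm⟩ : ∃ m, Nat.find hex = m + 1 := Nat.exists_eq_succ_of_ne_zero fun h => by
    have := Nat.find_spec hex
    rw [h] at this
    omega
  have hmin := Nat.find_min hex (show m < Nat.find hex by omega)
  exact ⟨m, not_le.1 hmin, hm ▸ Nat.find_spec hex⟩

theorem List.foldl_xor_xor {α : Type*} (f : α → Bool) (l : List α) (b c : Bool) :
    l.foldl (fun x s => xor x (f s)) (xor c b) = xor c (l.foldl (fun x s => xor x (f s)) b) := by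
  induction l generalizing b with
  | nil => rfl
  | cons a l ih => simp only [List.foldl_cons, Bool.xor_assoc, ih]

theorem List.foldl_xor_eq_xor_erase {α : Type*} [BEq α] [LawfulBEq α] (f : α → Bool)
    {l : List α} {t : α} (ht : t ∈ l) (b : Bool) :
    l.foldl (fun x s => xor x (f s)) b =
      xor (f t) ((l.erase t).foldl (fun x s => xor x (f s)) b) := by
  induction l generalizing b with
  | nil => cases ht
  | cons a l ih =>
    by_cases hat : a = t
    · subst hat
      rw [List.erase_cons_head, List.foldl_cons, Bool.xor_comm, List.foldl_xor_xor]
    · rw [List.erase_cons_tail (by simpa using hat), List.foldl_cons, List.foldl_cons,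
        ih ((List.mem_cons.1 ht).resolve_left (Ne.symm hat))]

theorem Measurable.foldl_xor {α Ω : Type*} {mΩ : MeasurableSpace Ω} {f : α → Ω → Bool}
    {l : List α} (hf : ∀ s ∈ l, Measurable (f s)) {b : Ω → Bool} (hb : Measurable b) :
    Measurable fun ω => l.foldl (fun x s => xor x (f s ω)) (b ω) := by
  induction l generalizing b with
  | nil => exact hb
  | cons a l ih =>
    have hfa := hf a List.mem_cons_self
    exact ih (fun s hs => hf s (List.mem_cons_of_mem a hs)) (by fun_prop)

theorem measurable_foldl_range_xor {Ω : Type*} {mΩ : MeasurableSpace Ω} {f : ℕ → Ω → Bool}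
    {t m : ℕ} (htm : t ≤ m) (hf : ∀ s, s ≠ t → Measurable (f s)) :
    Measurable fun ω =>
      xor ((List.range (m + 1)).foldl (fun x s => xor x (f s ω)) false) (f t ω) := by
  have ht : t ∈ List.range (m + 1) := List.mem_range.2 (Nat.lt_succ_of_le htm)
  simp only [List.foldl_xor_eq_xor_erase _ ht, Bool.xor_comm (f t _), Bool.xor_assoc,
    Bool.xor_self, Bool.xor_false]
  exact Measurable.foldl_xor (fun s hs => hf s (List.nodup_range.mem_erase_iff.1 hs).1)
    measurable_const

theorem ProbabilityTheory.iIndepFun.indepFun_of_measurable_iSup_compl {ι κ Ω γ : Type*}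
    {β : ι → Type*} {mΩ : MeasurableSpace Ω} {μ : Measure Ω} {mβ : ∀ i, MeasurableSpace (β i)}
    [MeasurableSpace γ] {F : ∀ i, Ω → β i} (hF : ∀ i, Measurable (F i)) (h : iIndepFun F μ)
    (t : ι) {G : κ → Ω → γ}
    (hG : ∀ i, Measurable[⨆ s ∈ ({t}ᶜ : Set ι), (mβ s).comap (F s)] (G i)) :
    IndepFun (fun ω i => G i ω) (F t) μ := by
  have hindep := indep_iSup_of_disjoint (fun i => (hF i).comap_le)
    ((iIndepFun_iff_iIndep _ _ _).1 h) (disjoint_compl_left (a := ({t} : Set ι)))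
  rw [IndepFun_iff_Indep]
  exact indep_of_indep_of_le_left (indep_of_indep_of_le_right hindep
    (le_iSup₂ (f := fun s (_ : s ∈ ({t} : Set ι)) => (mβ s).comap (F s)) t rfl))
    (@measurable_pi_lambda _ _ _ (⨆ s ∈ ({t}ᶜ : Set ι), (mβ s).comap (F s)) _ _ hG).comap_le

section Block

variable {Ω : Type*} {X Y Z : ℕ → Ω → Bool} {j k : ℕ}

theorem mem_blockEvent_ofFn {v : Fin k → Bool} {ω : Ω} :
    ω ∈ blockEvent X j (List.ofFn v) ↔ ∀ l : Fin k, X (j + 1 + l) ω = v l := by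
  simp +contextual [blockEvent, Fin.forall_iff, List.getD_eq_getElem?_getD]

theorem blockEvent_append (u u' : List Bool) :
    blockEvent X j (u ++ u') = blockEvent X j u ∩ blockEvent X (j + u.length) u' := by
  ext ω
  simp only [blockEvent, Set.mem_ofPred_eq, Set.mem_inter_iff, List.length_append]
  refine ⟨fun h => ⟨fun i hi => ?_, fun i hi => ?_⟩, fun ⟨h, h'⟩ i hi => ?_⟩
  · rw [h i (by omega), List.getD_append _ _ _ _ hi]
  · rw [show j + u.length + 1 + i = j + 1 + (u.length + i) by omega, h _ (by omega),
      List.getD_append_right _ _ _ _ (by omega), Nat.add_sub_cancel_left]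
  · rcases lt_or_ge i u.length with hi' | hi'
    · rw [h i hi', List.getD_append _ _ _ _ hi']
    · obtain ⟨i, rfl⟩ := Nat.exists_eq_add_of_le hi'
      rw [← add_assoc, show j + 1 + u.length = j + u.length + 1 by omega, h' i (by omega),
        List.getD_append_right _ _ _ _ hi', Nat.add_sub_cancel_left]

theorem iUnion_blockEvent_ofFn : ⋃ v : Fin k → Bool, blockEvent X j (List.ofFn v) = Set.univ :=
  Set.eq_univ_of_forall fun ω =>
    Set.mem_iUnion.2 ⟨fun l => X (j + 1 + l) ω, mem_blockEvent_ofFn.2 fun _ => rfl⟩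

theorem pairwise_disjoint_blockEvent_ofFn :
    Pairwise (Function.onFun Disjoint fun v : Fin k → Bool => blockEvent X j (List.ofFn v)) :=
  fun _ _ hne => Set.disjoint_left.2 fun _ h h' => hne <| funext fun l =>
    (mem_blockEvent_ofFn.1 h l).symm.trans (mem_blockEvent_ofFn.1 h' l)

theorem blockEvent_xor_inter_blockEvent (w v : Fin k → Bool) :
    blockEvent (fun i ω => xor (Y i ω) (Z i ω)) j (List.ofFn w) ∩ blockEvent Y j (List.ofFn v) =
      blockEvent Y j (List.ofFn v) ∩ blockEvent Z j (List.ofFn fun l => xor (v l) (w l)) := by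
  ext ω
  simp only [Set.mem_inter_iff, mem_blockEvent_ofFn]
  refine ⟨fun ⟨hw, hv⟩ => ⟨hv, fun l => ?_⟩, fun ⟨hv, hz⟩ => ⟨fun l => ?_, hv⟩⟩
  · rw [← hw l, hv l, ← Bool.xor_assoc, Bool.xor_self, Bool.false_xor]
  · rw [hv l, hz l, ← Bool.xor_assoc, Bool.xor_self, Bool.false_xor]

variable [MeasurableSpace Ω]

theorem measurableSet_blockEvent (hX : ∀ i, Measurable (X i)) (u : List Bool) :
    MeasurableSet (blockEvent X j u) := by
  simp only [blockEvent, Set.ofPred_forall]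
  exact .iInter fun i => .iInter fun _ => measurableSet_eq_fun (hX _) measurable_const

theorem sum_measure_inter_blockEvent_ofFn (μ : Measure Ω) (hX : ∀ i, Measurable (X i))
    {A : Set Ω} (hA : MeasurableSet A) :
    ∑ v : Fin k → Bool, μ (A ∩ blockEvent X j (List.ofFn v)) = μ A := by
  have hdisj : Pairwise (Function.onFun Disjoint fun v : Fin k → Bool =>
      A ∩ blockEvent X j (List.ofFn v)) := fun _ _ hne =>
    (pairwise_disjoint_blockEvent_ofFn hne).mono Set.inter_subset_right Set.inter_subset_right
  conv_rhs => rw [← Set.inter_univ A, ← iUnion_blockEvent_ofFn (X := X) (j := j) (k := k),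
    Set.inter_iUnion, measure_iUnion hdisj fun _ => hA.inter (measurableSet_blockEvent hX _),
    tsum_fintype]

end Block

section Asymp

variable {Ω : Type*} [MeasurableSpace Ω] {P : Measure Ω} {X Y Z : ℕ → Ω → Bool} {k : ℕ}

theorem isAsympTwoFaced_iff_ofFn : IsAsympTwoFaced P X k ↔ ∀ v : Fin k → Bool,
    Tendsto (fun j => (P (blockEvent X j (List.ofFn v))).toReal) atTop
      (nhds ((2 : ℝ) ^ k)⁻¹) :=
  ⟨fun h v => h _ List.length_ofFn, fun h u hu => by
    subst hu; simpa only [List.ofFn_get] using h u.get⟩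

theorem IsAsympTwoFaced.congr_of_tail (h : IsAsympTwoFaced P X k) (N : ℕ)
    (hXY : ∀ i, N < i → X i = Y i) : IsAsympTwoFaced P Y k := fun u hu =>
  (h u hu).congr' <| (eventually_ge_atTop N).mono fun j hj => by
    rw [show blockEvent X j u = blockEvent Y j u from
      Set.ext fun _ => forall₂_congr fun i _ => by rw [hXY _ (by omega)]]

theorem IsAsympTwoFaced.of_le [IsFiniteMeasure P] (hX : ∀ i, Measurable (X i)) {K : ℕ}
    (h : IsAsympTwoFaced P X K) (hkK : k ≤ K) : IsAsympTwoFaced P X k := by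
  obtain ⟨d, rfl⟩ := Nat.exists_eq_add_of_le hkK
  intro u hu
  have hsplit : ∀ j, (P (blockEvent X j u)).toReal =
      ∑ v : Fin d → Bool, (P (blockEvent X j (u ++ List.ofFn v))).toReal := fun j => by
    rw [← sum_measure_inter_blockEvent_ofFn P hX (measurableSet_blockEvent hX u)
      (j := j + k) (k := d), ENNReal.toReal_sum fun _ _ => measure_ne_top _ _]
    simp only [blockEvent_append, hu]
  have hval : ((2 : ℝ) ^ k)⁻¹ = ∑ _v : Fin d → Bool, ((2 : ℝ) ^ (k + d))⁻¹ := by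
    simp [pow_add]
  rw [funext hsplit, hval]
  exact tendsto_finsetSum _ fun v _ => h _ (by simp [hu])

theorem tendsto_sum_mul_of_sum_eq_one {ι α : Type*} [Fintype ι] {l : Filter α}
    {a b : ι → α → ℝ} {c : ℝ} (ha : ∀ i x, 0 ≤ a i x) (ha1 : ∀ x, ∑ i, a i x = 1)
    (hb : ∀ i, Tendsto (b i) l (nhds c)) :
    Tendsto (fun x => ∑ i, a i x * b i x) l (nhds c) := by
  have hdev : Tendsto (fun x => ∑ i, a i x * (b i x - c)) l (nhds 0) := by
    have hdev_i : ∀ i, Tendsto (fun x => a i x * (b i x - c)) l (nhds 0) := fun i => by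
      refine squeeze_zero_norm (fun x => ?_) (by simpa using ((hb i).sub_const c).abs)
      have hai : a i x ≤ 1 :=
        ha1 x ▸ Finset.single_le_sum (fun i _ => ha i x) (Finset.mem_univ i)
      rw [norm_mul, Real.norm_eq_abs, Real.norm_eq_abs, abs_of_nonneg (ha i x)]
      exact mul_le_of_le_one_left (abs_nonneg _) hai
    simpa using tendsto_finsetSum Finset.univ fun i _ => hdev_i i
  have hsum : ∀ x, ∑ i, a i x * b i x = c + ∑ i, a i x * (b i x - c) := fun x => by
    simp [mul_sub, Finset.sum_sub_distrib, ← Finset.sum_mul, ha1]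
  simpa [hsum] using hdev.const_add c

theorem IsAsympTwoFaced.xor_of_indepFun [IsProbabilityMeasure P] (hY : ∀ i, Measurable (Y i))
    (hZ : ∀ i, Measurable (Z i)) (hYZ : IndepFun (fun ω i => Y i ω) (fun ω i => Z i ω) P)
    (h : IsAsympTwoFaced P Z k) : IsAsympTwoFaced P (fun i ω => xor (Y i ω) (Z i ω)) k := by
  rw [isAsympTwoFaced_iff_ofFn] at h ⊢
  intro w
  have hcyl (j : ℕ) (u : List Bool) :
      MeasurableSet (blockEvent (fun i (y : ℕ → Bool) => y i) j u) :=
    measurableSet_blockEvent measurable_pi_apply u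
  have hsplit : ∀ j,
      (P (blockEvent (fun i ω => xor (Y i ω) (Z i ω)) j (List.ofFn w))).toReal =
      ∑ v : Fin k → Bool, (P (blockEvent Y j (List.ofFn v))).toReal *
        (P (blockEvent Z j (List.ofFn fun l => xor (v l) (w l)))).toReal := fun j => by
    rw [← sum_measure_inter_blockEvent_ofFn P hY
      (measurableSet_blockEvent (fun i => by fun_prop) _),
      ENNReal.toReal_sum fun _ _ => measure_ne_top _ _]
    refine Finset.sum_congr rfl fun v _ => ?_
    rw [blockEvent_xor_inter_blockEvent, ← ENNReal.toReal_mul]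
    exact congrArg ENNReal.toReal (hYZ.measure_inter_preimage_eq_mul _ _ (hcyl j _) (hcyl j _))
  have hY1 : ∀ j, ∑ v : Fin k → Bool, (P (blockEvent Y j (List.ofFn v))).toReal = 1 :=
      fun j => by
    have := sum_measure_inter_blockEvent_ofFn P hY MeasurableSet.univ (j := j) (k := k)
    simp only [Set.univ_inter, measure_univ] at this
    rw [← ENNReal.toReal_sum fun _ _ => measure_ne_top _ _, this, ENNReal.toReal_one]
  rw [funext hsplit]
  exact tendsto_sum_mul_of_sum_eq_one (fun _ _ => ENNReal.toReal_nonneg) hY1 fun v => h _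

end Asymp

/-- let `0 = n_0 < n_1 < n_2 < ⋯` and let `X^1, X^2, …` be mutually
independent binary processes (here `X i` is the process `X^{i+1}`, which is
asymptotically `n_{i+1}`-order two-faced). If `W_i = X^1_i ⊕ ⋯ ⊕ X^m_i` whenever
`n_{m-1} < i ≤ n_m`, then `W` is asymptotically twice two-faced: asymptotically
`k`-order two-faced for every `k ≥ 1`. -/
theorem xor_series_asymp_twice_two_faced {Ω : Type*} [MeasurableSpace Ω]
    (P : Measure Ω) [IsProbabilityMeasure P]
    (n : ℕ → ℕ) (hn0 : n 0 = 0) (hmono : StrictMono n)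
    (X : ℕ → ℕ → Ω → Bool) (hX : ∀ i m, Measurable (X i m))
    (hindep : iIndepFun
      (fun i ω (m : ℕ) => X i m ω) P)
    (htf : ∀ i : ℕ, IsAsympTwoFaced P (X i) (n (i + 1)))
    (W : ℕ → Ω → Bool)
    (hW : ∀ (m i : ℕ), n m < i → i ≤ n (m + 1) → ∀ ω,
      W i ω = (List.range (m + 1)).foldl (fun b j => xor b (X j i ω)) false) :
    ∀ k, 1 ≤ k → IsAsympTwoFaced P W k := by
  intro k hk
  set t := k - 1
  have hZ : IsAsympTwoFaced P (X t) k :=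
    (htf t).of_le (hX t) (by rw [Nat.sub_add_cancel hk]; exact hmono.le_apply)
  let Y : ℕ → Ω → Bool := fun i ω => if n t < i then xor (W i ω) (X t i ω) else false
  have hY : ∀ i, Measurable[⨆ s ∈ ({t}ᶜ : Set ℕ),
      MeasurableSpace.comap (fun ω m => X s m ω) inferInstance] (Y i) := fun i => by
    by_cases hi : n t < i
    · obtain ⟨m, hm, hm'⟩ :=
        Nat.exists_lt_and_le_apply_succ (n := n) (i := i) (by rw [hn0]; omega) hmono.le_apply
      simp only [Y, if_pos hi, hW m i hm hm']
      exact measurable_foldl_range_xor (by have := hmono.lt_iff_lt.1 (hi.trans_le hm'); omega)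
        fun s hs => (measurable_pi_apply i).comp
          (Measurable.of_comap_le (f := fun ω m => X s m ω)
            (le_iSup₂ (f := fun s (_ : s ∈ ({t}ᶜ : Set ℕ)) =>
              MeasurableSpace.comap (fun ω m => X s m ω) inferInstance) s hs))
    · simpa only [Y, if_neg hi] using measurable_const
  have hYZ :=
    hindep.indepFun_of_measurable_iSup_compl (fun i => measurable_pi_lambda _ (hX i)) t hY
  have hY' : ∀ i, Measurable (Y i) := fun i =>
    (hY i).mono (iSup₂_le fun s _ => (measurable_pi_lambda _ (hX s)).comap_le) le_rfl
  refine (hZ.xor_of_indepFun hY' (hX t) hYZ).congr_of_tail (n t) fun i hi => funext fun ω => ?_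
  simp only [Y, if_pos hi, Bool.xor_assoc, Bool.xor_self, Bool.xor_false]
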